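/- Let ρ > 0 and let W ≥ 0 be an integrable random variable. For s < 0, a > 0, λ > 0 with ρ > aλ, the double integral ∫_0^∞ E[ 1 − exp(s W e^{−ρy}) ] a λ e^{aλ y} dy is finite, and after the change of variables z = W e^{−ρy} it equals ∫_0^∞ (1 − e^{s z}) E[ W^{aλ/ρ} 1_{[W ≥ z]} ] (aλ/ρ) z^{−aλ/ρ − 1} dz. -/

import Mathlib

open MeasureTheory Set Real

lemma lmr_one_sub_exp_nonneg {x : ℝ} (hx : x ≤ 0) : 0 ≤ 1 - Real.exp x := by
  have := Real.exp_le_one_iff.mpr hx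
  linarith

lemma lmr_one_sub_exp_le {x : ℝ} (hx : x ≤ 0) : 1 - Real.exp x ≤ -x := by
  have := Real.add_one_le_exp x
  linarith

lemma lmr_image (ρ w : ℝ) (hρ : 0 < ρ) (hw : 0 < w) :
    (fun y => w * Real.exp (-(ρ * y))) '' Set.Ioi 0 = Set.Ioo 0 w := by
  ext z
  simp only [Set.mem_image, Set.mem_Ioi, Set.mem_Ioo]
  constructor
  · rintro ⟨y, hy, rfl⟩
    have h1 : Real.exp (-(ρ * y)) < 1 := by
      rw [Real.exp_lt_one_iff]
      nlinarith
    have h2 : 0 < Real.exp (-(ρ * y)) := Real.exp_pos _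
    constructor
    · positivity
    · nlinarith
  · rintro ⟨h1, h2⟩
    refine ⟨Real.log (w / z) / ρ, ?_, ?_⟩
    · have : 1 < w / z := (one_lt_div h1).mpr h2
      have := Real.log_pos this
      positivity
    · have hρ' : ρ ≠ 0 := ne_of_gt hρ
      rw [show -(ρ * (Real.log (w / z) / ρ)) = -Real.log (w / z) by field_simp]
      rw [Real.exp_neg, Real.exp_log (by positivity)]
      field_simp

lemma lmr_deriv (ρ w : ℝ) (y : ℝ) :
    HasDerivAt (fun y => w * Real.exp (-(ρ * y))) (-(ρ * w * Real.exp (-(ρ * y)))) y := by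
  have h1 : HasDerivAt (fun y : ℝ => -(ρ * y)) (-ρ) y := by
    have h := ((hasDerivAt_id' y).const_mul ρ).neg; rw [mul_one] at h; exact h
  have := (h1.exp).const_mul w
  exact this.congr_deriv (by ring)

lemma lmr_inj (ρ w : ℝ) (hρ : 0 < ρ) (hw : 0 < w) :
    Set.InjOn (fun y => w * Real.exp (-(ρ * y))) (Set.Ioi 0) := by
  intro x _ y _ hxy
  have := mul_left_cancel₀ (ne_of_gt hw) hxy
  have := Real.exp_injective this
  have : ρ * x = ρ * y := by linarith
  exact mul_left_cancel₀ (ne_of_gt hρ) this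

/-- Integrability of the `y`-side integrand, for a fixed `w ≥ 0`. -/
lemma lmr_F_int (ρ c : ℝ) (hρ : 0 < ρ) (hc : 0 < c) (hcρ : c < ρ)
    (w : ℝ) (hw : 0 ≤ w) (s : ℝ) (hs : s < 0) :
    IntegrableOn (fun y => (1 - Real.exp (s * w * Real.exp (-(ρ * y)))) * (c * Real.exp (c * y)))
      (Set.Ioi 0) := by
  have h0 : IntegrableOn (fun y => Real.exp (-(ρ - c) * y)) (Set.Ioi (0:ℝ)) :=
    exp_neg_integrableOn_Ioi 0 (by linarith)
  have hbound : Integrable (fun y => ((-s) * w * c) * Real.exp (-(ρ - c) * y))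
      (volume.restrict (Set.Ioi (0:ℝ))) := h0.const_mul _
  refine hbound.mono' ?_ ?_
  · have hcont : Continuous (fun y =>
        (1 - Real.exp (s * w * Real.exp (-(ρ * y)))) * (c * Real.exp (c * y))) := by
      fun_prop
    exact hcont.aestronglyMeasurable
  · refine Filter.Eventually.of_forall fun y => ?_
    have hx : s * w * Real.exp (-(ρ * y)) ≤ 0 :=
      mul_nonpos_of_nonpos_of_nonneg (mul_nonpos_of_nonpos_of_nonneg hs.le hw)
        (Real.exp_pos _).le
    have h0 : 0 ≤ 1 - Real.exp (s * w * Real.exp (-(ρ * y))) := lmr_one_sub_exp_nonneg hx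
    have h1 : 1 - Real.exp (s * w * Real.exp (-(ρ * y))) ≤ (-s) * w * Real.exp (-(ρ * y)) := by
      have := lmr_one_sub_exp_le hx
      linarith
    have hcexp : 0 < c * Real.exp (c * y) := by positivity
    rw [Real.norm_of_nonneg (by positivity)]
    have key : (-s) * w * Real.exp (-(ρ * y)) * (c * Real.exp (c * y))
        = (-s) * w * c * Real.exp (-(ρ - c) * y) := by
      have he : Real.exp (-(ρ * y)) * Real.exp (c * y) = Real.exp (-(ρ - c) * y) := by
        rw [← Real.exp_add]; ring_nf
      linear_combination (-s) * w * c * he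
    nlinarith [mul_le_mul_of_nonneg_right h1 (le_of_lt hcexp)]

/-- Pointwise identity for the change of variables. -/
lemma lmr_ptwise (ρ c : ℝ) (hρ : 0 < ρ) (hc : 0 < c)
    (w : ℝ) (hw : 0 < w) (s : ℝ) (y : ℝ) :
    |(-(ρ * w * Real.exp (-(ρ * y))))| •
      ((1 - Real.exp (s * (w * Real.exp (-(ρ * y))))) * w ^ (c / ρ) *
        ((c / ρ) * (w * Real.exp (-(ρ * y))) ^ (-(c / ρ) - 1)))
      = (1 - Real.exp (s * w * Real.exp (-(ρ * y)))) * (c * Real.exp (c * y)) := by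
  have hE : 0 < Real.exp (-(ρ * y)) := Real.exp_pos _
  set E := Real.exp (-(ρ * y)) with hEdef
  have hz : 0 < w * E := by positivity
  rw [smul_eq_mul, abs_neg, abs_of_nonneg (by positivity)]
  have h3 : (w * E) * (w * E) ^ (-(c / ρ) - 1) = (w * E) ^ (-(c / ρ)) := by
    calc (w * E) * (w * E) ^ (-(c / ρ) - 1)
        = (w * E) ^ (1:ℝ) * (w * E) ^ (-(c / ρ) - 1) := by rw [Real.rpow_one]
      _ = (w * E) ^ (1 + (-(c / ρ) - 1)) := (Real.rpow_add hz _ _).symm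
      _ = (w * E) ^ (-(c / ρ)) := by norm_num
  have h2 : w ^ (c / ρ) * (w * E) ^ (-(c / ρ)) = Real.exp (c * y) := by
    have hwE : w / (w * E) = Real.exp (ρ * y) := by
      rw [hEdef, Real.exp_neg]
      field_simp
    calc w ^ (c / ρ) * (w * E) ^ (-(c / ρ))
        = w ^ (c / ρ) / (w * E) ^ (c / ρ) := by
          rw [Real.rpow_neg hz.le]; ring
      _ = (w / (w * E)) ^ (c / ρ) := (Real.div_rpow hw.le hz.le (c / ρ)).symm
      _ = (Real.exp (ρ * y)) ^ (c / ρ) := by rw [hwE]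
      _ = Real.exp (c * y) := by
          rw [← Real.exp_mul]; congr 1; field_simp
  have hs' : s * (w * E) = s * w * E := by ring
  rw [hs']
  have hscal : ρ * (c / ρ) = c := by field_simp
  linear_combination (1 - Real.exp (s * w * E)) * (c / ρ) * ρ * w ^ (c / ρ) * h3
    + (1 - Real.exp (s * w * E)) * w ^ (c / ρ) * (w * E) ^ (-(c / ρ)) * hscal
    + (1 - Real.exp (s * w * E)) * c * h2

/-- Per-`w` change of variables. -/
lemma lmr_key (ρ c : ℝ) (hρ : 0 < ρ) (hc : 0 < c) (hcρ : c < ρ)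
    (w : ℝ) (hw : 0 ≤ w) (s : ℝ) (hs : s < 0) :
    IntegrableOn (fun z => (1 - Real.exp (s * z)) * (if z ≤ w then w ^ (c / ρ) else 0)
      * ((c / ρ) * z ^ (-(c / ρ) - 1))) (Set.Ioi 0) ∧
    (∫ y in Set.Ioi (0:ℝ), (1 - Real.exp (s * w * Real.exp (-(ρ * y)))) * (c * Real.exp (c * y)))
      = ∫ z in Set.Ioi (0:ℝ), (1 - Real.exp (s * z)) * (if z ≤ w then w ^ (c / ρ) else 0)
          * ((c / ρ) * z ^ (-(c / ρ) - 1)) := by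
  rcases eq_or_lt_of_le hw with hw0 | hw'
  · -- w = 0
    have hz0 : (0:ℝ) ^ (c / ρ) = 0 := Real.zero_rpow (div_pos hc hρ).ne'
    constructor
    · have hfun : (fun z => (1 - Real.exp (s * z)) * (if z ≤ w then w ^ (c / ρ) else 0)
          * ((c / ρ) * z ^ (-(c / ρ) - 1))) = fun _ => (0:ℝ) := by
        funext z
        rw [← hw0]
        simp [hz0]
      rw [hfun]
      exact integrableOn_zero
    · rw [← hw0]
      simp [hz0]
  · -- w > 0
    have hderiv : ∀ y ∈ Set.Ioi (0:ℝ), HasDerivWithinAt (fun y => w * Real.exp (-(ρ * y)))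
        (-(ρ * w * Real.exp (-(ρ * y)))) (Set.Ioi 0) y :=
      fun y _ => (lmr_deriv ρ w y).hasDerivWithinAt
    have hinj := lmr_inj ρ w hρ hw'
    set g : ℝ → ℝ := fun z => (1 - Real.exp (s * z)) * w ^ (c / ρ)
        * ((c / ρ) * z ^ (-(c / ρ) - 1)) with hgdef
    have hiff := integrableOn_image_iff_integrableOn_abs_deriv_smul measurableSet_Ioi
      hderiv hinj g
    have heq := integral_image_eq_integral_abs_deriv_smul measurableSet_Ioi hderiv hinj g
    rw [lmr_image ρ w hρ hw'] at hiff heq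
    have hpt : (fun y => |(-(ρ * w * Real.exp (-(ρ * y))))| • g (w * Real.exp (-(ρ * y))))
        = fun y => (1 - Real.exp (s * w * Real.exp (-(ρ * y)))) * (c * Real.exp (c * y)) := by
      funext y
      have := lmr_ptwise ρ c hρ hc w hw' s y
      rw [hgdef]
      convert this using 3 <;> ring
    rw [hpt] at hiff heq
    have hgint : IntegrableOn g (Set.Ioo 0 w) :=
      hiff.mpr (lmr_F_int ρ c hρ hc hcρ w hw s hs)
    -- relate the `h` integrand on `Ioi 0` to the indicator of `g` on `Ioo 0 w`
    have hW : ∀ᵐ (z : ℝ) ∂(volume : Measure ℝ), z ≠ w := by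
      rw [ae_iff]
      simp only [ne_eq, not_not, Set.setOf_eq_eq_singleton]
      exact measure_singleton w
    have hae : (fun z => (1 - Real.exp (s * z)) * (if z ≤ w then w ^ (c / ρ) else 0)
        * ((c / ρ) * z ^ (-(c / ρ) - 1)))
        =ᵐ[volume.restrict (Set.Ioi 0)] (Set.Ioo 0 w).indicator g := by
      filter_upwards [ae_restrict_of_ae hW, ae_restrict_mem measurableSet_Ioi] with z hzw hz0
      by_cases hzle : z ≤ w
      · have hzlt : z < w := lt_of_le_of_ne hzle hzw
        rw [Set.indicator_of_mem (Set.mem_Ioo.mpr ⟨Set.mem_Ioi.mp hz0, hzlt⟩) g, hgdef]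
        simp only [if_pos hzle]
      · rw [Set.indicator_of_notMem (by simp only [Set.mem_Ioo, not_and]; intro _; linarith [lt_of_not_ge hzle])]
        simp [hzle]
    constructor
    · exact ((hgint.integrable_indicator measurableSet_Ioo).integrableOn).congr hae.symm
    · calc (∫ y in Set.Ioi (0:ℝ), (1 - Real.exp (s * w * Real.exp (-(ρ * y))))
            * (c * Real.exp (c * y)))
          = ∫ z in Set.Ioo 0 w, g z := heq.symm
        _ = ∫ z in Set.Ioi (0:ℝ), (Set.Ioo 0 w).indicator g z := by
            rw [setIntegral_indicator measurableSet_Ioo,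
              Set.inter_eq_self_of_subset_right Set.Ioo_subset_Ioi_self]
        _ = _ := (integral_congr_ae hae).symm

theorem levy_measure_representation {Ω : Type*} [MeasureSpace Ω]
    [IsProbabilityMeasure (volume : Measure Ω)]
    (ρ a lam : ℝ) (hρ : 0 < ρ) (ha : 0 < a) (hlam : 0 < lam) (hcond : a * lam < ρ)
    (W : Ω → ℝ) (hWmeas : Measurable W) (hW0 : ∀ ω, 0 ≤ W ω) (hWint : Integrable W)
    (s : ℝ) (hs : s < 0) :
    IntegrableOn (fun y => (∫ ω, (1 - Real.exp (s * W ω * Real.exp (-(ρ * y)))))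
        * (a * lam * Real.exp (a * lam * y))) (Set.Ioi 0) ∧
    (∫ y in Set.Ioi (0:ℝ), (∫ ω, (1 - Real.exp (s * W ω * Real.exp (-(ρ * y)))))
        * (a * lam * Real.exp (a * lam * y)))
      = ∫ z in Set.Ioi (0:ℝ), (1 - Real.exp (s * z))
          * (∫ ω, if z ≤ W ω then (W ω) ^ (a * lam / ρ) else 0)
          * ((a * lam / ρ) * z ^ (-(a * lam / ρ) - 1)) := by
  set c := a * lam with hcdef
  have hc : 0 < c := mul_pos ha hlam
  set ν := (volume : Measure ℝ).restrict (Set.Ioi (0:ℝ)) with hνdef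
  -- integrability of F on the product space
  have hFmeas : Measurable (fun p : Ω × ℝ =>
      (1 - Real.exp (s * W p.1 * Real.exp (-(ρ * p.2)))) * (c * Real.exp (c * p.2))) := by
    fun_prop
  have hB : Integrable (fun p : Ω × ℝ => ((-s) * W p.1) * (c * Real.exp (-(ρ - c) * p.2)))
      ((volume : Measure Ω).prod ν) := by
    have hg : Integrable (fun y => c * Real.exp (-(ρ - c) * y)) ν :=
      (exp_neg_integrableOn_Ioi 0 (by linarith)).const_mul c
    exact Integrable.mul_prod (hWint.const_mul (-s)) hg
  have hFint : Integrable (fun p : Ω × ℝ =>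
      (1 - Real.exp (s * W p.1 * Real.exp (-(ρ * p.2)))) * (c * Real.exp (c * p.2)))
      ((volume : Measure Ω).prod ν) := by
    refine hB.mono' hFmeas.aestronglyMeasurable (Filter.Eventually.of_forall fun p => ?_)
    have hx : s * W p.1 * Real.exp (-(ρ * p.2)) ≤ 0 :=
      mul_nonpos_of_nonpos_of_nonneg (mul_nonpos_of_nonpos_of_nonneg hs.le (hW0 p.1))
        (Real.exp_pos _).le
    have h0 : 0 ≤ 1 - Real.exp (s * W p.1 * Real.exp (-(ρ * p.2))) := lmr_one_sub_exp_nonneg hx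
    have h1 : 1 - Real.exp (s * W p.1 * Real.exp (-(ρ * p.2)))
        ≤ (-s) * W p.1 * Real.exp (-(ρ * p.2)) := by
      have := lmr_one_sub_exp_le hx
      linarith
    have hcexp : 0 < c * Real.exp (c * p.2) := by positivity
    rw [Real.norm_of_nonneg (by positivity)]
    have key : (-s) * W p.1 * Real.exp (-(ρ * p.2)) * (c * Real.exp (c * p.2))
        = (-s) * W p.1 * (c * Real.exp (-(ρ - c) * p.2)) := by
      have he : Real.exp (-(ρ * p.2)) * Real.exp (c * p.2) = Real.exp (-(ρ - c) * p.2) := by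
        rw [← Real.exp_add]; ring_nf
      linear_combination (-s) * W p.1 * c * he
    nlinarith [mul_le_mul_of_nonneg_right h1 (le_of_lt hcexp)]
  -- key per-ω change of variables
  have hkey := fun ω => lmr_key ρ c hρ hc hcond (W ω) (hW0 ω) s hs
  -- first conjunct
  have conj1 : IntegrableOn (fun y => (∫ ω, (1 - Real.exp (s * W ω * Real.exp (-(ρ * y)))))
      * (c * Real.exp (c * y))) (Set.Ioi 0) := by
    have h := hFint.integral_prod_right
    refine Integrable.congr h (Filter.Eventually.of_forall fun y => ?_)
    show (∫ ω, (1 - Real.exp (s * W ω * Real.exp (-(ρ * y)))) * (c * Real.exp (c * y)))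
        = (∫ ω, (1 - Real.exp (s * W ω * Real.exp (-(ρ * y))))) * (c * Real.exp (c * y))
    exact integral_mul_const _ _
  refine ⟨conj1, ?_⟩
  -- integrability of G on the product space
  have hGmeas : Measurable (fun p : Ω × ℝ => (1 - Real.exp (s * p.2))
      * (if p.2 ≤ W p.1 then (W p.1) ^ (c / ρ) else 0)
      * ((c / ρ) * p.2 ^ (-(c / ρ) - 1))) := by
    refine Measurable.mul (Measurable.mul (by fun_prop) ?_) (by fun_prop)
    exact Measurable.ite (measurableSet_le measurable_snd (hWmeas.comp measurable_fst))
      (by fun_prop) measurable_const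
  have hGnorm : ∀ ω, (∫ z, ‖(1 - Real.exp (s * z))
      * (if z ≤ W ω then (W ω) ^ (c / ρ) else 0) * ((c / ρ) * z ^ (-(c / ρ) - 1))‖ ∂ν)
      = ∫ z, (1 - Real.exp (s * z))
      * (if z ≤ W ω then (W ω) ^ (c / ρ) else 0) * ((c / ρ) * z ^ (-(c / ρ) - 1)) ∂ν := by
    intro ω
    refine integral_congr_ae ?_
    filter_upwards [ae_restrict_mem measurableSet_Ioi] with z hz
    have hz' : (0:ℝ) < z := hz
    have h1 : 0 ≤ 1 - Real.exp (s * z) :=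
      lmr_one_sub_exp_nonneg (mul_nonpos_of_nonpos_of_nonneg hs.le hz'.le)
    have h2 : 0 ≤ (if z ≤ W ω then (W ω) ^ (c / ρ) else 0) := by
      split
      · exact Real.rpow_nonneg (hW0 ω) _
      · exact le_rfl
    have h3 : 0 ≤ (c / ρ) * z ^ (-(c / ρ) - 1) := by positivity
    exact Real.norm_of_nonneg (mul_nonneg (mul_nonneg h1 h2) h3)
  have hGint : Integrable (fun p : Ω × ℝ => (1 - Real.exp (s * p.2))
      * (if p.2 ≤ W p.1 then (W p.1) ^ (c / ρ) else 0)
      * ((c / ρ) * p.2 ^ (-(c / ρ) - 1))) ((volume : Measure Ω).prod ν) := by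
    refine (integrable_prod_iff hGmeas.aestronglyMeasurable).mpr
      ⟨Filter.Eventually.of_forall fun ω => (hkey ω).1, ?_⟩
    have : (fun ω => ∫ z, ‖(1 - Real.exp (s * z))
        * (if z ≤ W ω then (W ω) ^ (c / ρ) else 0) * ((c / ρ) * z ^ (-(c / ρ) - 1))‖ ∂ν)
        = fun ω => ∫ y, (1 - Real.exp (s * W ω * Real.exp (-(ρ * y))))
          * (c * Real.exp (c * y)) ∂ν := by
      funext ω
      rw [hGnorm ω, ← (hkey ω).2]
    rw [this]
    exact hFint.integral_prod_left
  -- the chain of equalities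
  calc (∫ y in Set.Ioi (0:ℝ), (∫ ω, (1 - Real.exp (s * W ω * Real.exp (-(ρ * y)))))
        * (c * Real.exp (c * y)))
      = ∫ y, (∫ ω, (1 - Real.exp (s * W ω * Real.exp (-(ρ * y))))
          * (c * Real.exp (c * y))) ∂ν := by
        refine integral_congr_ae (Filter.Eventually.of_forall fun y => ?_)
        exact (integral_mul_const _ _).symm
    _ = ∫ ω, (∫ y, (1 - Real.exp (s * W ω * Real.exp (-(ρ * y))))
          * (c * Real.exp (c * y)) ∂ν) := by
        exact (integral_integral_swap hFint).symm
    _ = ∫ ω, (∫ z, (1 - Real.exp (s * z))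
          * (if z ≤ W ω then (W ω) ^ (c / ρ) else 0)
          * ((c / ρ) * z ^ (-(c / ρ) - 1)) ∂ν) := by
        refine integral_congr_ae (Filter.Eventually.of_forall fun ω => ?_)
        exact (hkey ω).2
    _ = ∫ z, (∫ ω, (1 - Real.exp (s * z))
          * (if z ≤ W ω then (W ω) ^ (c / ρ) else 0)
          * ((c / ρ) * z ^ (-(c / ρ) - 1))) ∂ν := integral_integral_swap hGint
    _ = ∫ z in Set.Ioi (0:ℝ), (1 - Real.exp (s * z))
          * (∫ ω, if z ≤ W ω then (W ω) ^ (c / ρ) else 0)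
          * ((c / ρ) * z ^ (-(c / ρ) - 1)) := by
        refine integral_congr_ae (Filter.Eventually.of_forall fun z => ?_)
        simp only [integral_mul_const, integral_const_mul]
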